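/- For every dimension d ≥ 1 and every real z with -d < z < d, the integral of ‖x‖^z over the cube (-1,1)^d is at most (3d)^d / (d + z). -/

import Mathlib

/-!
The cube lies in the closed ball of radius `√d`, and polar coordinates give
`∫_{‖x‖ ≤ R} ‖x‖^z dx = d · vol(B₁) · R^(d+z) / (d+z)`. The unit ball lies in the cube, so
`vol(B₁) ≤ 2^d`; moreover `√d^(d+z) ≤ √d^(2d) = d^d` because `z < d`, and `d · 2^d ≤ 3^d`.
-/

open MeasureTheory Set Metric Measure
open scoped ENNReal

local notation "dim" => Module.finrank ℝ

lemma lintegral_Ioc_rpow {p R : ℝ} (hp : -1 < p) (hR : 0 ≤ R) :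
    ∫⁻ y in Ioc 0 R, ENNReal.ofReal (y ^ p) = ENNReal.ofReal (R ^ (p + 1) / (p + 1)) := by
  rw [← ofReal_integral_eq_lintegral_ofReal, ← intervalIntegral.integral_of_le hR,
    integral_rpow (Or.inl hp), Real.zero_rpow (by linarith), sub_zero]
  · exact (intervalIntegrable_iff_integrableOn_Ioc_of_le hR).mp
      (intervalIntegral.intervalIntegrable_rpow' hp)
  · filter_upwards [ae_restrict_mem measurableSet_Ioc] with y hy
    exact Real.rpow_nonneg hy.1.le _

section Polar

variable {E : Type*} [NormedAddCommGroup E] [NormedSpace ℝ E] [MeasurableSpace E] [BorelSpace E]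
  [Nontrivial E] [FiniteDimensional ℝ E] (μ : Measure E) [μ.IsAddHaarMeasure]

lemma lintegral_fun_norm_addHaar {f : ℝ → ℝ≥0∞} (hf : Measurable f) :
    ∫⁻ x, f ‖x‖ ∂μ =
      dim E * μ (ball 0 1) * ∫⁻ y in Ioi (0 : ℝ), ENNReal.ofReal (y ^ (dim E - 1)) * f y := by
  have hmeas : Measurable fun x : sphere (0 : E) 1 × Ioi (0 : ℝ) ↦ f x.2 := by fun_prop
  calc
    ∫⁻ x, f ‖x‖ ∂μ = ∫⁻ x : ({(0)}ᶜ : Set E), f ‖(x : E)‖ ∂(μ.comap (↑)) := by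
      rw [lintegral_subtype_comap (measurableSet_singleton 0).compl fun x : E ↦ f ‖x‖,
        restrict_compl_singleton]
    _ = ∫⁻ x, f x.2 ∂μ.toSphere.prod (volumeIoiPow (dim E - 1)) := by
      simpa using μ.measurePreserving_homeomorphUnitSphereProd.lintegral_comp hmeas
    _ = μ.toSphere univ * ∫⁻ y : Ioi (0 : ℝ), f y ∂volumeIoiPow (dim E - 1) := by
      rw [lintegral_prod _ hmeas.aemeasurable]
      simp [lintegral_const, mul_comm]
    _ = _ := by
      rw [volumeIoiPow, lintegral_withDensity_eq_lintegral_mul _ (by fun_prop)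
          (by fun_prop : Measurable fun y : Ioi (0 : ℝ) ↦ f y),
        toSphere_apply_univ, ← lintegral_subtype_comap measurableSet_Ioi]
      rfl

lemma setLIntegral_closedBall_norm_rpow {z R : ℝ} (hz : -(dim E : ℝ) < z) (hR : 0 ≤ R) :
    ∫⁻ x in closedBall 0 R, ENNReal.ofReal (‖x‖ ^ z) ∂μ =
      dim E * μ (ball 0 1) * ENNReal.ofReal (R ^ (dim E + z) / (dim E + z)) := by
  have hdim : 1 ≤ dim E := Module.finrank_pos
  set g : ℝ → ℝ≥0∞ := (Iic R).indicator fun r ↦ ENNReal.ofReal (r ^ z)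
  have hg : Measurable g := (by fun_prop : Measurable fun r : ℝ ↦ ENNReal.ofReal (r ^ z)).indicator
    measurableSet_Iic
  have hradial : ∫⁻ x in closedBall 0 R, ENNReal.ofReal (‖x‖ ^ z) ∂μ = ∫⁻ x, g ‖x‖ ∂μ := by
    rw [← lintegral_indicator measurableSet_closedBall]
    congr 1 with x
    simp [g, indicator]
  have hprofile : ∫⁻ y in Ioi (0 : ℝ), ENNReal.ofReal (y ^ (dim E - 1)) * g y =
      ∫⁻ y in Ioc 0 R, ENNReal.ofReal (y ^ ((dim E : ℝ) + z - 1)) := by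
    simp_rw [g, ← indicator_mul_right _ fun y ↦ ENNReal.ofReal (y ^ (dim E - 1))]
    rw [lintegral_indicator measurableSet_Iic,
      restrict_restrict measurableSet_Iic, Iic_inter_Ioi]
    refine setLIntegral_congr_fun measurableSet_Ioc fun y hy ↦ ?_
    rw [← ENNReal.ofReal_mul (pow_nonneg hy.1.le _), ← Real.rpow_natCast, ← Real.rpow_add hy.1,
      Nat.cast_sub hdim, Nat.cast_one, sub_add_eq_add_sub]
  rw [hradial, lintegral_fun_norm_addHaar μ hg, hprofile, lintegral_Ioc_rpow (by linarith) hR,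
    sub_add_cancel]

end Polar

namespace EuclideanSpace

variable {ι : Type*} [Fintype ι]

lemma cube_subset_closedBall_sqrt_card :
    {x : EuclideanSpace ℝ ι | ∀ i, x i ∈ Ioo (-1 : ℝ) 1} ⊆
      closedBall 0 √(Fintype.card ι) := by
  intro x hx
  rw [mem_closedBall_zero_iff, EuclideanSpace.norm_eq]
  gcongr
  calc ∑ i, ‖x i‖ ^ 2 ≤ Finset.univ.card • (1 : ℝ) :=
        Finset.sum_le_card_nsmul _ _ _ fun i _ ↦ by
          simpa [sq_le_one_iff_abs_le_one, abs_le] using And.intro (hx i).1.le (hx i).2.le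
    _ = Fintype.card ι := by simp

lemma ball_subset_cube :
    ball (0 : EuclideanSpace ℝ ι) 1 ⊆ {x | ∀ i, x i ∈ Ioo (-1 : ℝ) 1} := by
  intro x hx i
  rw [mem_ball_zero_iff] at hx
  exact abs_lt.mp ((PiLp.norm_apply_le x i).trans_lt hx)

lemma volume_cube :
    volume {x : EuclideanSpace ℝ ι | ∀ i, x i ∈ Ioo (-1 : ℝ) 1} = 2 ^ Fintype.card ι := by
  have hpre : {x : EuclideanSpace ℝ ι | ∀ i, x i ∈ Ioo (-1 : ℝ) 1} =
      WithLp.ofLp ⁻¹' univ.pi fun _ ↦ Ioo (-1) 1 := by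
    ext x; simp
  rw [hpre, (PiLp.volume_preserving_ofLp ι).measure_preimage
    (MeasurableSet.univ_pi fun _ ↦ measurableSet_Ioo).nullMeasurableSet, volume_pi_pi]
  norm_num

lemma volume_ball_zero_one_le_two_pow :
    volume (ball (0 : EuclideanSpace ℝ ι) 1) ≤ 2 ^ Fintype.card ι :=
  volume_cube (ι := ι) ▸ measure_mono ball_subset_cube

end EuclideanSpace

lemma mul_two_pow_le_three_pow (d : ℕ) : d * 2 ^ d ≤ 3 ^ d := by
  rcases lt_or_ge d 2 with h | h
  · interval_cases d <;> norm_num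
  induction d, h using Nat.le_induction with
  | base => norm_num
  | succ n hn ih =>
    calc (n + 1) * 2 ^ (n + 1) = (2 * n + 2) * 2 ^ n := by ring
      _ ≤ 3 * n * 2 ^ n := by gcongr; omega
      _ ≤ 3 * 3 ^ n := by rw [mul_assoc]; gcongr
      _ = 3 ^ (n + 1) := by ring

theorem stmt0_general (d : ℕ) (z : ℝ) (hz : -(d : ℝ) < z) (hz' : z < d) :
    (∫⁻ x : EuclideanSpace ℝ (Fin d) in {x | ∀ i, x i ∈ Ioo (-1 : ℝ) 1},
        ENNReal.ofReal (‖x‖ ^ z)) ≤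
      ENNReal.ofReal ((3 * (d : ℝ)) ^ d / ((d : ℝ) + z)) := by
  have hd : 1 ≤ d := by exact_mod_cast (by linarith : (0 : ℝ) < d)
  have : NeZero d := ⟨by omega⟩
  have hdz : 0 < (d : ℝ) + z := by linarith
  have hradius : √d ^ ((d : ℝ) + z) ≤ (d : ℝ) ^ d := by
    calc √d ^ ((d : ℝ) + z) ≤ √d ^ ((2 * d : ℕ) : ℝ) := by
          gcongr
          · exact Real.one_le_sqrt.mpr (by exact_mod_cast hd)
          · push_cast; linarith
      _ = (d : ℝ) ^ d := by rw [Real.rpow_natCast, pow_mul, Real.sq_sqrt d.cast_nonneg]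
  have hconst : (d : ℝ) * 2 ^ d ≤ 3 ^ d := by exact_mod_cast mul_two_pow_le_three_pow d
  calc _ ≤ ∫⁻ x : EuclideanSpace ℝ (Fin d) in closedBall 0 √d, ENNReal.ofReal (‖x‖ ^ z) :=
        lintegral_mono_set <| by
          simpa using EuclideanSpace.cube_subset_closedBall_sqrt_card (ι := Fin d)
    _ = d * volume (ball (0 : EuclideanSpace ℝ (Fin d)) 1) *
          ENNReal.ofReal (√d ^ ((d : ℝ) + z) / ((d : ℝ) + z)) := by
        simpa using setLIntegral_closedBall_norm_rpow (E := EuclideanSpace ℝ (Fin d)) volume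
          (by simpa using hz) (Real.sqrt_nonneg d)
    _ ≤ ENNReal.ofReal (d * 2 ^ d) * ENNReal.ofReal ((d : ℝ) ^ d / ((d : ℝ) + z)) := by
        rw [ENNReal.ofReal_mul (by positivity)]
        gcongr
        · simp
        · simpa using EuclideanSpace.volume_ball_zero_one_le_two_pow (ι := Fin d)
    _ ≤ ENNReal.ofReal ((3 * (d : ℝ)) ^ d / ((d : ℝ) + z)) := by
        rw [← ENNReal.ofReal_mul (by positivity), mul_pow, mul_div_assoc']
        gcongr

/-- For every dimension `d ≥ 1` and every real `z` with `-d < z < d`, the integral of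
`‖x‖^z` over the cube `(-1,1)^d` is at most `(3d)^d / (d + z)`. -/
theorem stmt0 (d : ℕ) (hd : 1 ≤ d) (z : ℝ) (hz : -(d : ℝ) < z) (hz' : z < d) :
    (∫⁻ x : EuclideanSpace ℝ (Fin d) in {x | ∀ i, x i ∈ Ioo (-1 : ℝ) 1},
        ENNReal.ofReal (‖x‖ ^ z)) ≤
      ENNReal.ofReal ((3 * (d : ℝ)) ^ d / ((d : ℝ) + z)) :=
  stmt0_general d z hz hz'
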